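/- Let p ∈ (1, 2) and ε > 0, and define ν_ε(y) := (|y|² + ε²)^{1/2} for y ∈ ℝ^d. Then for all x, u ∈ ℝ^d one has ν_ε(x+u)^p − ν_ε(x)^p − p ν_ε(x)^{p−2} ⟨x, u⟩ ≥ (p(p−1)/2) |u|² (max(|x|, |x+u|)² + ε²)^{(p−2)/2}. -/

import Mathlib

open scoped RealInnerProductSpace
open Set

/-! With `φ t = ν_ε(x + t • u) ^ p`, the second derivative is
`φ'' t = p ν_ε(y)^(p-4) ((p-2)⟪y, u⟫² + ν_ε(y)² ‖u‖²)` at `y = x + t • u`. Since `p ≤ 2`,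
Cauchy–Schwarz bounds this below by `p (p-1) ‖u‖² ν_ε(y)^(p-2)`, and as `t ↦ t^((p-2)/2)` is
nonincreasing and `‖y‖ ≤ max ‖x‖ ‖x + u‖` on the segment, by the constant
`p (p-1) ‖u‖² ((max ‖x‖ ‖x + u‖)² + ε²)^((p-2)/2)`. Taylor's formula on `[0, 1]` concludes. -/

theorem mul_sq_div_two_le_sub_sub_mul_of_le_second_deriv {f f' f'' : ℝ → ℝ} {a b C : ℝ}
    (hab : a ≤ b) (hf : ∀ t ∈ Icc a b, HasDerivAt f (f' t) t)
    (hf' : ∀ t ∈ Icc a b, HasDerivAt f' (f'' t) t)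
    (hC : ∀ t ∈ Icc a b, C ≤ f'' t) :
    C * (b - a) ^ 2 / 2 ≤ f b - f a - f' a * (b - a) := by
  have mem_of_interior {t : ℝ} (ht : t ∈ interior (Icc a b)) : t ∈ Icc a b :=
    interior_subset ht
  have slope_bound (t : ℝ) (ht : t ∈ Icc a b) : C * (t - a) ≤ f' t - f' a :=
    (convex_Icc a b).mul_sub_le_image_sub_of_le_deriv
      (fun t ht => (hf' t ht).continuousAt.continuousWithinAt)
      (fun t ht => (hf' t (mem_of_interior ht)).differentiableAt.differentiableWithinAt)
      (fun t ht => (hf' t (mem_of_interior ht)).deriv ▸ hC t (mem_of_interior ht))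
      a (left_mem_Icc.2 hab) t ht ht.1
  set h : ℝ → ℝ := fun t => f t - f' a * t - C * (t - a) ^ 2 / 2
  have hh : ∀ t ∈ Icc a b, HasDerivAt h (f' t - f' a - C * (t - a)) t := fun t ht => by
    have linear : HasDerivAt (fun t => f' a * t) (f' a) t := by
      simpa using (hasDerivAt_id t).const_mul (f' a)
    have quadratic : HasDerivAt (fun t => C * (t - a) ^ 2 / 2) (C * (t - a)) t := by
      refine ((((hasDerivAt_id' t).sub_const a).fun_pow 2).const_mul C |>.div_const 2).congr_deriv
        (by norm_num; ring)
    exact ((hf t ht).sub linear).sub quadratic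
  have h_mono : MonotoneOn h (Icc a b) :=
    monotoneOn_of_deriv_nonneg (convex_Icc a b)
      (fun t ht => (hh t ht).continuousAt.continuousWithinAt)
      (fun t ht => (hh t (mem_of_interior ht)).differentiableAt.differentiableWithinAt)
      (fun t ht => (hh t (mem_of_interior ht)).deriv ▸
        sub_nonneg.2 (slope_bound t (mem_of_interior ht)))
  have h_ab := h_mono (left_mem_Icc.2 hab) (right_mem_Icc.2 hab) hab
  simp only [h] at h_ab
  linarith

theorem norm_add_smul_le_max {E : Type*} [SeminormedAddCommGroup E] [NormedSpace ℝ E] (x u : E)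
    {t : ℝ} (ht : t ∈ Icc (0 : ℝ) 1) : ‖x + t • u‖ ≤ max ‖x‖ ‖x + u‖ :=
  (convexOn_norm convex_univ).le_max_of_mem_segment trivial trivial
    (by rw [segment_eq_image']; exact ⟨t, ht, by simp⟩)

section InnerProductSpace

variable {E : Type*} [NormedAddCommGroup E] [InnerProductSpace ℝ E]

/-- The right-hand side is the second derivative of `t ↦ (‖y + t • u‖² + ε²)^(p/2)` at `0`. -/
theorem mul_rpow_le_hessian_rpow_norm_sq_add_sq {p ε M : ℝ} (hp1 : 1 ≤ p) (hp2 : p ≤ 2)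
    (hε : ε ≠ 0) {y : E} (hy : ‖y‖ ≤ M) (u : E) :
    p * (p - 1) * ‖u‖ ^ 2 * (M ^ 2 + ε ^ 2) ^ ((p - 2) / 2) ≤
      p * (‖y‖ ^ 2 + ε ^ 2) ^ ((p - 4) / 2) *
        ((p - 2) * ⟪y, u⟫ ^ 2 + (‖y‖ ^ 2 + ε ^ 2) * ‖u‖ ^ 2) := by
  set g := ‖y‖ ^ 2 + ε ^ 2
  have hg : 0 < g := by positivity
  have g_le : g ≤ M ^ 2 + ε ^ 2 := by
    have := sq_le_sq' (by linarith [norm_nonneg y]) hy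
    linarith
  have cauchy_schwarz : ⟪y, u⟫ ^ 2 ≤ g * ‖u‖ ^ 2 := by
    have := abs_real_inner_le_norm y u
    rw [← sq_abs]
    nlinarith [abs_nonneg ⟪y, u⟫, norm_nonneg u, norm_nonneg y, sq_nonneg ε, sq_nonneg ‖u‖]
  have rpow_split : g ^ ((p - 2) / 2) = g ^ ((p - 4) / 2) * g := by
    rw [← Real.rpow_add_one hg.ne']
    ring_nf
  have rpow_anti : (M ^ 2 + ε ^ 2) ^ ((p - 2) / 2) ≤ g ^ ((p - 2) / 2) :=
    Real.rpow_le_rpow_of_nonpos hg g_le (by linarith)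
  have hp : 0 ≤ p * (p - 1) := mul_nonneg (by linarith) (by linarith)
  calc p * (p - 1) * ‖u‖ ^ 2 * (M ^ 2 + ε ^ 2) ^ ((p - 2) / 2)
      ≤ p * (p - 1) * ‖u‖ ^ 2 * g ^ ((p - 2) / 2) := by gcongr
    _ = p * g ^ ((p - 4) / 2) * ((p - 1) * (g * ‖u‖ ^ 2)) := by rw [rpow_split]; ring
    _ ≤ p * g ^ ((p - 4) / 2) * ((p - 2) * ⟪y, u⟫ ^ 2 + g * ‖u‖ ^ 2) := by
        gcongr
        nlinarith

variable (x u : E) {ε : ℝ} (p : ℝ)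

theorem hasDerivAt_norm_add_smul_sq_add_sq (t : ℝ) :
    HasDerivAt (fun t : ℝ => ‖x + t • u‖ ^ 2 + ε ^ 2) (2 * ⟪x + t • u, u⟫) t := by
  simpa using (((hasDerivAt_id t).smul_const u).const_add x).norm_sq.add_const (ε ^ 2)

theorem hasDerivAt_inner_add_smul (t : ℝ) :
    HasDerivAt (fun t : ℝ => ⟪x + t • u, u⟫) (‖u‖ ^ 2) t := by
  simp only [inner_add_left, real_inner_smul_left, real_inner_self_eq_norm_sq]
  simpa using ((hasDerivAt_id t).mul_const (‖u‖ ^ 2)).const_add ⟪x, u⟫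

theorem hasDerivAt_rpow_norm_add_smul_sq_add_sq (hε : ε ≠ 0) (t : ℝ) :
    HasDerivAt (fun t : ℝ => (‖x + t • u‖ ^ 2 + ε ^ 2) ^ (p / 2))
      (p * (‖x + t • u‖ ^ 2 + ε ^ 2) ^ ((p - 2) / 2) * ⟪x + t • u, u⟫) t := by
  refine ((hasDerivAt_norm_add_smul_sq_add_sq x u t).rpow_const
    (Or.inl (by positivity))).congr_deriv ?_
  rw [show p / 2 - 1 = (p - 2) / 2 by ring]
  ring

theorem hasDerivAt_deriv_rpow_norm_add_smul_sq_add_sq (hε : ε ≠ 0) (t : ℝ) :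
    HasDerivAt (fun t : ℝ => p * (‖x + t • u‖ ^ 2 + ε ^ 2) ^ ((p - 2) / 2) * ⟪x + t • u, u⟫)
      (p * (‖x + t • u‖ ^ 2 + ε ^ 2) ^ ((p - 4) / 2) *
        ((p - 2) * ⟪x + t • u, u⟫ ^ 2 + (‖x + t • u‖ ^ 2 + ε ^ 2) * ‖u‖ ^ 2)) t := by
  have hg : 0 < ‖x + t • u‖ ^ 2 + ε ^ 2 := by positivity
  refine ((((hasDerivAt_norm_add_smul_sq_add_sq x u t).rpow_const (p := (p - 2) / 2)
    (Or.inl hg.ne')).const_mul p).mul (hasDerivAt_inner_add_smul x u t)).congr_deriv ?_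
  rw [show (p - 2) / 2 - 1 = (p - 4) / 2 by ring,
    show (p - 2) / 2 = (p - 4) / 2 + 1 by ring, Real.rpow_add_one hg.ne']
  ring

end InnerProductSpace

/-- Regularized key inequality from the proof of Lemma 3.5: for `p ∈ (1, 2)`,
`ε > 0`, `ν_ε(y) = (|y|² + ε²)^(1/2)` and all `x, u ∈ ℝ^d`,
`ν_ε(x+u)^p - ν_ε(x)^p - p ν_ε(x)^(p-2)⟨x,u⟩
  ≥ (p(p-1)/2)|u|² (max(|x|,|x+u|)² + ε²)^((p-2)/2)`. -/
theorem nu_eps_key_inequality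
    (p : ℝ) (hp1 : 1 < p) (hp2 : p < 2) (ε : ℝ) (hε : 0 < ε) (d : ℕ)
    (x u : EuclideanSpace ℝ (Fin d)) :
    p * (p - 1) / 2 * ‖u‖ ^ 2 *
        ((max ‖x‖ ‖x + u‖) ^ 2 + ε ^ 2) ^ ((p - 2) / 2) ≤
      Real.sqrt (‖x + u‖ ^ 2 + ε ^ 2) ^ p - Real.sqrt (‖x‖ ^ 2 + ε ^ 2) ^ p -
        p * Real.sqrt (‖x‖ ^ 2 + ε ^ 2) ^ (p - 2) * ⟪x, u⟫ := by
  have taylor := mul_sq_div_two_le_sub_sub_mul_of_le_second_deriv zero_le_one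
    (fun t _ => hasDerivAt_rpow_norm_add_smul_sq_add_sq x u p hε.ne' t)
    (fun t _ => hasDerivAt_deriv_rpow_norm_add_smul_sq_add_sq x u p hε.ne' t)
    (fun t ht => mul_rpow_le_hessian_rpow_norm_sq_add_sq hp1.le hp2.le hε.ne'
      (norm_add_smul_le_max x u ht) u)
  simp only [zero_smul, one_smul, add_zero, sub_zero, one_pow, mul_one] at taylor
  rw [← Real.rpow_div_two_eq_sqrt _ (by positivity), ← Real.rpow_div_two_eq_sqrt _ (by positivity),
    ← Real.rpow_div_two_eq_sqrt _ (by positivity)]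
  linarith
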